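/- arXiv:1901.03098 — 2 statements merged into one kernel-verified Lean document; each statement's English description precedes it below -/
import Mathlib

section
/- The Apéry numbers a_n = \sum_{k=0}^n \binom{n}{k}^2 \binom{n+k}{k}^2 satisfy the recurrence (n+1)^3 a_{n+1} - (34n^3+51n^2+27n+5) a_n + n^3 a_{n-1} = 0 for all n \ge 1, together with a_0 = 1 and a_1 = 5. -/
/-- The Apéry numbers `a n = ∑ k, (n choose k)^2 * ((n+k) choose k)^2`. -/
def aperyA (n : ℕ) : ℤ :=
  ∑ k ∈ Finset.range (n + 1), (n.choose k : ℤ) ^ 2 * ((n + k).choose k : ℤ) ^ 2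

/-!
Creative telescoping (Zeilberger). Write `F(n, k) = (C(n, k) C(n + k, k))²` for the summands.
Applying the recurrence operator at `n + 1` to `F(·, k)` gives `G(k + 1) - G(k)`, where
`G(0) = 0` and `G(k + 1) = 4(2n + 3)(k(2k + 1) - (2n + 3)²) F(n + 1, k)`; summing over `k`,
the right side telescopes to `G(n + 3) = 0`. The certificate identity is a polynomial identity
once every term is written as a rational multiple of `F(n + 2, k + 1)`, using the ratios of
`C(n, k) C(n + k, k)` under `n ↦ n + 1` and `(n, k) ↦ (n + 1, k + 1)`.
-/

open Finset

theorem Nat.succ_mul_choose_succ_add (n k : ℕ) :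
    (n + 1) * (n + 1 + k).choose k = (n + k + 1) * (n + k).choose k := by
  have h := Nat.choose_mul_succ_eq (n + k) k
  rw [show n + k + 1 - k = n + 1 by omega, show n + k + 1 = n + 1 + k by omega] at h
  rw [show n + k + 1 = n + 1 + k by omega]
  linarith

theorem Int.succ_sub_mul_choose_succ (n k : ℕ) :
    ((n : ℤ) + 1 - k) * (n + 1).choose k = (n + 1) * n.choose k := by
  rcases le_or_gt k (n + 1) with hk | hk
  · have h := Nat.choose_mul_succ_eq n k
    zify [hk] at h
    linarith
  · simp [Nat.choose_eq_zero_of_lt hk, Nat.choose_eq_zero_of_lt (show n < k by omega)]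

def aperyBinom (n k : ℕ) : ℤ := n.choose k * (n + k).choose k

theorem aperyA_eq_sum_aperyBinom_sq (n : ℕ) :
    aperyA n = ∑ k ∈ range (n + 1), aperyBinom n k ^ 2 := by
  simp only [aperyA, aperyBinom, mul_pow]

theorem aperyBinom_eq_zero_of_lt {n k : ℕ} (h : n < k) : aperyBinom n k = 0 := by
  simp [aperyBinom, Nat.choose_eq_zero_of_lt h]

theorem aperyBinom_succ_left (n k : ℕ) :
    ((n : ℤ) + 1 - k) * aperyBinom (n + 1) k = ((n : ℤ) + k + 1) * aperyBinom n k := by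
  have h₁ := Int.succ_sub_mul_choose_succ n k
  have h₂ : ((n : ℤ) + 1) * (n + 1 + k).choose k = (n + k + 1) * (n + k).choose k := by
    exact_mod_cast Nat.succ_mul_choose_succ_add n k
  refine mul_left_cancel₀ (show (n : ℤ) + 1 ≠ 0 by positivity) ?_
  simp only [aperyBinom]
  linear_combination ((n : ℤ) + 1) * ((n + 1 + k).choose k : ℤ) * h₁
    + ((n : ℤ) + 1) * (n.choose k : ℤ) * h₂

theorem aperyBinom_succ_succ (n k : ℕ) :
    ((k : ℤ) + 1) ^ 2 * aperyBinom (n + 1) (k + 1)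
      = ((n : ℤ) + k + 1) * ((n : ℤ) + k + 2) * aperyBinom n k := by
  have h₁ : ((k : ℤ) + 1) * (n + 1).choose (k + 1) = (n + 1) * n.choose k := by
    have := Nat.add_one_mul_choose_eq n k
    zify at this
    linear_combination -this
  have h₂ : ((k : ℤ) + 1) * (n + 1 + k + 1).choose (k + 1)
      = (n + k + 2) * (n + 1 + k).choose k := by
    have := Nat.add_one_mul_choose_eq (n + 1 + k) k
    zify at this
    linear_combination -this
  have h₃ : ((n : ℤ) + 1) * (n + 1 + k).choose k = (n + k + 1) * (n + k).choose k := by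
    exact_mod_cast Nat.succ_mul_choose_succ_add n k
  refine mul_left_cancel₀ (show (n : ℤ) + 1 ≠ 0 by positivity) ?_
  simp only [aperyBinom, show n + 1 + (k + 1) = n + 1 + k + 1 by omega]
  linear_combination
    ((k : ℤ) + 1) * ((n + 1 + k + 1).choose (k + 1) : ℤ) * ((n : ℤ) + 1) * h₁
    + ((n : ℤ) + 1) ^ 2 * (n.choose k : ℤ) * h₂
    + ((n : ℤ) + 1) * (n.choose k : ℤ) * ((n : ℤ) + k + 2) * h₃

theorem aperyA_eq_sum_range_of_le {n N : ℕ} (h : n + 1 ≤ N) :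
    aperyA n = ∑ k ∈ range N, aperyBinom n k ^ 2 := by
  rw [aperyA_eq_sum_aperyBinom_sq]
  refine sum_subset (range_subset_range.2 h) fun k _ hk => ?_
  rw [aperyBinom_eq_zero_of_lt (by simpa using hk), zero_pow two_ne_zero]

-- The left side of the recurrence at `n + 1`, shifted so that no `n - 1` occurs.
def aperyRec (u : ℕ → ℤ) (n : ℕ) : ℤ :=
  ((n : ℤ) + 2) ^ 3 * u (n + 2)
    - (34 * ((n : ℤ) + 1) ^ 3 + 51 * ((n : ℤ) + 1) ^ 2 + 27 * ((n : ℤ) + 1) + 5) * u (n + 1)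
    + ((n : ℤ) + 1) ^ 3 * u n

theorem aperyRec_sum (f : ℕ → ℕ → ℤ) (s : Finset ℕ) (n : ℕ) :
    aperyRec (fun m => ∑ k ∈ s, f m k) n = ∑ k ∈ s, aperyRec (fun m => f m k) n := by
  simp only [aperyRec, mul_sum, sum_add_distrib, sum_sub_distrib]

def aperyCert (n k : ℕ) : ℤ :=
  4 * (2 * n + 1) * (k * (2 * k + 1) - (2 * n + 1) ^ 2) * aperyBinom n k ^ 2

theorem aperyRec_aperyBinom_sq_zero (n : ℕ) :
    aperyRec (fun m => aperyBinom m 0 ^ 2) n = aperyCert (n + 1) 0 := by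
  simp only [aperyRec, aperyCert, aperyBinom, Nat.choose_zero_right]
  push_cast
  ring

theorem aperyRec_aperyBinom_sq_succ (n k : ℕ) :
    aperyRec (fun m => aperyBinom m (k + 1) ^ 2) n
      = aperyCert (n + 1) (k + 1) - aperyCert (n + 1) k := by
  have S₁ := congrArg (· ^ 2) (aperyBinom_succ_left (n + 1) (k + 1))
  have S₂ := congrArg (· ^ 2) (aperyBinom_succ_left n (k + 1))
  have S₃ := congrArg (· ^ 2) (aperyBinom_succ_succ (n + 1) k)
  push_cast at S₁ S₂ S₃
  have hD : (((n : ℤ) + k + 2) * ((n : ℤ) + k + 3)) ^ 2 ≠ 0 := by positivity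
  refine mul_left_cancel₀ hD ?_
  -- now every term is a polynomial multiple of `aperyBinom (n + 2) (k + 1) ^ 2`
  simp only [aperyRec, aperyCert]
  push_cast
  linear_combination
    ((34 * ((n : ℤ) + 1) ^ 3 + 51 * ((n : ℤ) + 1) ^ 2 + 27 * ((n : ℤ) + 1) + 5
        + 4 * (2 * ((n : ℤ) + 1) + 1)
          * (((k : ℤ) + 1) * (2 * ((k : ℤ) + 1) + 1) - (2 * ((n : ℤ) + 1) + 1) ^ 2))
      * ((n : ℤ) + k + 2) ^ 2 - ((n : ℤ) + 1) ^ 3 * ((n : ℤ) - k) ^ 2) * S₁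
    - ((n : ℤ) + 1) ^ 3 * ((n : ℤ) + k + 3) ^ 2 * S₂
    - 4 * (2 * ((n : ℤ) + 1) + 1)
      * ((k : ℤ) * (2 * k + 1) - (2 * ((n : ℤ) + 1) + 1) ^ 2) * S₃

theorem aperyRec_aperyA (n : ℕ) : aperyRec aperyA n = 0 := by
  have hA : ∀ m ≤ n + 2, aperyA m = ∑ k ∈ range (n + 3), aperyBinom m k ^ 2 :=
    fun m hm => aperyA_eq_sum_range_of_le (by omega)
  calc aperyRec aperyA n
      = aperyRec (fun m => ∑ k ∈ range (n + 3), aperyBinom m k ^ 2) n := by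
        simp only [aperyRec, hA n (by omega), hA (n + 1) (by omega), hA (n + 2) le_rfl]
    _ = ∑ k ∈ range (n + 3), aperyRec (fun m => aperyBinom m k ^ 2) n := aperyRec_sum _ _ _
    _ = aperyCert (n + 1) (n + 2) := by
        rw [sum_range_succ', sum_congr rfl fun k _ => aperyRec_aperyBinom_sq_succ n k,
          sum_range_sub, aperyRec_aperyBinom_sq_zero, sub_add_cancel]
    _ = 0 := by simp [aperyCert, aperyBinom_eq_zero_of_lt (by omega : n + 1 < n + 2)]

theorem apery_a_recurrence :
    aperyA 0 = 1 ∧ aperyA 1 = 5 ∧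
      ∀ n : ℕ, 1 ≤ n →
        ((n : ℤ) + 1) ^ 3 * aperyA (n + 1)
          - (34 * (n : ℤ) ^ 3 + 51 * (n : ℤ) ^ 2 + 27 * n + 5) * aperyA n
          + (n : ℤ) ^ 3 * aperyA (n - 1) = 0 := by
  refine ⟨by simp [aperyA], by simp [aperyA, sum_range_succ], fun n hn => ?_⟩
  obtain ⟨m, rfl⟩ := Nat.exists_eq_add_of_le' hn
  have h := aperyRec_aperyA m
  rw [aperyRec] at h
  rw [Nat.add_sub_cancel]
  push_cast
  linear_combination h
end

section
/- The Franel numbers f(n) = \sum_{j=0}^n \binom{n}{j}^3 satisfy the recurrence (n+1)^2 f(n+1) = (7n^2+7n+2) f(n) + 8 n^2 f(n-1) for all n \ge 1, together with f(0) = 1 and f(1) = 2. -/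
/-- The Franel numbers `f n = ∑ j, (n choose j)^3`. -/
def franel (n : ℕ) : ℤ :=
  ∑ j ∈ Finset.range (n + 1), (n.choose j : ℤ) ^ 3

/-- The Zeilberger certificate for the Franel recurrence. -/
def gcert (n j : ℕ) : ℤ :=
  -(14*(n:ℤ)^2+33*n+20) * (n.choose (j+1):ℤ)^3
  - (15*(n:ℤ)^2+42*n+30) * (n.choose (j+1):ℤ)^2 * (n.choose j:ℤ)
  - (6*(n:ℤ)^2+21*n+18) * (n.choose (j+1):ℤ) * (n.choose j:ℤ)^2
  - ((n:ℤ)+2)^2 * (n.choose j:ℤ)^3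

/-- The summand of the linear combination of three Franel numbers. -/
def Lterm (n k : ℕ) : ℤ :=
  ((n:ℤ)+2)^2 * (((n+2).choose k : ℤ))^3
  - (7*(n:ℤ)^2+21*n+16) * (((n+1).choose k : ℤ))^3
  - 8*((n:ℤ)+1)^2 * ((n.choose k : ℤ))^3

/-- The partial-sum / telescoping function. -/
def Gb (n : ℕ) : ℕ → ℤ
  | 0 => 0
  | 1 => -(14*(n:ℤ)^2+33*n+20)
  | (k+2) => gcert n k

lemma rel (n j : ℕ) :
    (n.choose (j+1) : ℤ) * ((j:ℤ)+1) = (n.choose j : ℤ) * ((n:ℤ) - j) := by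
  rcases le_or_gt j n with h | h
  · have h0 := Nat.choose_succ_right_eq n j
    zify [h] at h0
    linarith [h0]
  · rw [Nat.choose_eq_zero_of_lt (by omega), Nat.choose_eq_zero_of_lt h]
    simp

lemma key (n j : ℕ) : Lterm n (j+2) = gcert n (j+1) - gcert n j := by
  have e1 := rel n j
  have e2 := rel n (j+1)
  push_cast at e1 e2
  unfold Lterm gcert
  simp only [Nat.choose_succ_succ]
  push_cast
  have hne : (((j:ℤ)+1)^3 * ((j:ℤ)+2)^3) ≠ 0 := by positivity
  apply mul_left_cancel₀ hne
  linear_combination (((-60)*(n.choose (j+1):ℤ)^2 + (-24)*(n.choose j:ℤ)*(n.choose (j+1):ℤ) + (-234)*(j:ℤ)*(n.choose (j+1):ℤ)^2 + (-96)*(j:ℤ)*(n.choose j:ℤ)*(n.choose (j+1):ℤ) + (-354)*(j:ℤ)^2*(n.choose (j+1):ℤ)^2 + (-150)*(j:ℤ)^2*(n.choose j:ℤ)*(n.choose (j+1):ℤ) + (-258)*(j:ℤ)^3*(n.choose (j+1):ℤ)^2 + (-114)*(j:ℤ)^3*(n.choose j:ℤ)*(n.choose (j+1):ℤ) + (-90)*(j:ℤ)^4*(n.choose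 (j+1):ℤ)^2 + (-42)*(j:ℤ)^4*(n.choose j:ℤ)*(n.choose (j+1):ℤ) + (-12)*(j:ℤ)^5*(n.choose (j+1):ℤ)^2 + (-6)*(j:ℤ)^5*(n.choose j:ℤ)*(n.choose (j+1):ℤ) + (-114)*(n:ℤ)*(n.choose (j+1):ℤ)^2 + (-36)*(n:ℤ)*(n.choose j:ℤ)*(n.choose (j+1):ℤ) + (-441)*(n:ℤ)*(j:ℤ)*(n.choose (j+1):ℤ)^2 + (-144)*(n:ℤ)*(j:ℤ)*(n.choose j:ℤ)*(n.choose (j+1):ℤ) + (-660)*(n:ℤ)*(j:ℤ)^2*(n.choose (j+1):ℤ)^2 + (-225)*(n:ℤ)*(j:ℤ)^2*(n.choose j:ℤ)*(n.choose (j+1):ℤ) + (-474)*(n:ℤ)*(j:ℤ)^3*(n.choose (j+1):ℤ)^2 + (-171)*(n:ℤ)*(j:ℤ)^3*(n.choose j:ℤ)*(n.choose (j+1):ℤ) + (-162)*(n:ℤ)*(j:ℤ)^4*(n.choose (j+1):ℤ)^2 + (-63)*(n:ℤ)*(j:ℤ)^4*(n.choose j:ℤ)*(n.choose (j+1):ℤ)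 + (-21)*(n:ℤ)*(j:ℤ)^5*(n.choose (j+1):ℤ)^2 + (-9)*(n:ℤ)*(j:ℤ)^5*(n.choose j:ℤ)*(n.choose (j+1):ℤ) + (-60)*(n:ℤ)^2*(n.choose (j+1):ℤ)^2 + (-12)*(n:ℤ)^2*(n.choose j:ℤ)*(n.choose (j+1):ℤ) + (-228)*(n:ℤ)^2*(j:ℤ)*(n.choose (j+1):ℤ)^2 + (-48)*(n:ℤ)^2*(j:ℤ)*(n.choose j:ℤ)*(n.choose (j+1):ℤ) + (-333)*(n:ℤ)^2*(j:ℤ)^2*(n.choose (j+1):ℤ)^2 + (-75)*(n:ℤ)^2*(j:ℤ)^2*(n.choose j:ℤ)*(n.choose (j+1):ℤ) + (-231)*(n:ℤ)^2*(j:ℤ)^3*(n.choose (j+1):ℤ)^2 + (-57)*(n:ℤ)^2*(j:ℤ)^3*(n.choose j:ℤ)*(n.choose (j+1):ℤ) + (-75)*(n:ℤ)^2*(j:ℤ)^4*(n.choose (j+1):ℤ)^2 + (-21)*(n:ℤ)^2*(j:ℤ)^4*(n.choose j:ℤ)*(n.choose (j+1):ℤ) + (-9)*(n:ℤ)^2*(j:ℤ)^5*(n.choose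 (j+1):ℤ)^2 + (-3)*(n:ℤ)^2*(j:ℤ)^5*(n.choose j:ℤ)*(n.choose (j+1):ℤ) + (-6)*(n:ℤ)^3*(n.choose (j+1):ℤ)^2 + (-21)*(n:ℤ)^3*(j:ℤ)*(n.choose (j+1):ℤ)^2 + (-27)*(n:ℤ)^3*(j:ℤ)^2*(n.choose (j+1):ℤ)^2 + (-15)*(n:ℤ)^3*(j:ℤ)^3*(n.choose (j+1):ℤ)^2 + (-3)*(n:ℤ)^3*(j:ℤ)^4*(n.choose (j+1):ℤ)^2)) * e1 + (((24)*(n.choose (j+1):ℤ)*(n.choose (j+2):ℤ) + (60)*(n.choose (j+1):ℤ)^2 + (48)*(n.choose j:ℤ)*(n.choose (j+2):ℤ) + (168)*(n.choose j:ℤ)*(n.choose (j+1):ℤ) + (48)*(n.choose j:ℤ)^2 + (96)*(j:ℤ)*(n.choose (j+1):ℤ)*(n.choose (j+2):ℤ) + (234)*(j:ℤ)*(n.choose (j+1):ℤ)^2 + (192)*(j:ℤ)*(n.choose j:ℤ)*(n.choose (j+2):ℤ) + (660)*(j:ℤ)*(n.choose j:ℤ)*(n.choose (j+1):ℤ) +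 (192)*(j:ℤ)*(n.choose j:ℤ)^2 + (150)*(j:ℤ)^2*(n.choose (j+1):ℤ)*(n.choose (j+2):ℤ) + (354)*(j:ℤ)^2*(n.choose (j+1):ℤ)^2 + (300)*(j:ℤ)^2*(n.choose j:ℤ)*(n.choose (j+2):ℤ) + (1008)*(j:ℤ)^2*(n.choose j:ℤ)*(n.choose (j+1):ℤ) + (300)*(j:ℤ)^2*(n.choose j:ℤ)^2 + (114)*(j:ℤ)^3*(n.choose (j+1):ℤ)*(n.choose (j+2):ℤ) + (258)*(j:ℤ)^3*(n.choose (j+1):ℤ)^2 + (228)*(j:ℤ)^3*(n.choose j:ℤ)*(n.choose (j+2):ℤ) + (744)*(j:ℤ)^3*(n.choose j:ℤ)*(n.choose (j+1):ℤ) + (228)*(j:ℤ)^3*(n.choose j:ℤ)^2 + (42)*(j:ℤ)^4*(n.choose (j+1):ℤ)*(n.choose (j+2):ℤ) + (90)*(j:ℤ)^4*(n.choose (j+1):ℤ)^2 + (84)*(j:ℤ)^4*(n.choose j:ℤ)*(n.choose (j+2):ℤ) + (264)*(j:ℤ)^4*(n.choose j:ℤ)*(n.choose (j+1):ℤ) +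 (84)*(j:ℤ)^4*(n.choose j:ℤ)^2 + (6)*(j:ℤ)^5*(n.choose (j+1):ℤ)*(n.choose (j+2):ℤ) + (12)*(j:ℤ)^5*(n.choose (j+1):ℤ)^2 + (12)*(j:ℤ)^5*(n.choose j:ℤ)*(n.choose (j+2):ℤ) + (36)*(j:ℤ)^5*(n.choose j:ℤ)*(n.choose (j+1):ℤ) + (12)*(j:ℤ)^5*(n.choose j:ℤ)^2 + (12)*(n:ℤ)*(n.choose (j+1):ℤ)*(n.choose (j+2):ℤ) + (30)*(n:ℤ)*(n.choose (j+1):ℤ)^2 + (48)*(n:ℤ)*(n.choose j:ℤ)*(n.choose (j+2):ℤ) + (192)*(n:ℤ)*(n.choose j:ℤ)*(n.choose (j+1):ℤ) + (48)*(n:ℤ)*(n.choose j:ℤ)^2 + (48)*(n:ℤ)*(j:ℤ)*(n.choose (j+1):ℤ)*(n.choose (j+2):ℤ) + (111)*(n:ℤ)*(j:ℤ)*(n.choose (j+1):ℤ)^2 + (192)*(n:ℤ)*(j:ℤ)*(n.choose j:ℤ)*(n.choose (j+2):ℤ) + (744)*(n:ℤ)*(j:ℤ)*(n.choose j:ℤ)*(n.choose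 (j+1):ℤ) + (192)*(n:ℤ)*(j:ℤ)*(n.choose j:ℤ)^2 + (75)*(n:ℤ)*(j:ℤ)^2*(n.choose (j+1):ℤ)*(n.choose (j+2):ℤ) + (156)*(n:ℤ)*(j:ℤ)^2*(n.choose (j+1):ℤ)^2 + (300)*(n:ℤ)*(j:ℤ)^2*(n.choose j:ℤ)*(n.choose (j+2):ℤ) + (1116)*(n:ℤ)*(j:ℤ)^2*(n.choose j:ℤ)*(n.choose (j+1):ℤ) + (300)*(n:ℤ)*(j:ℤ)^2*(n.choose j:ℤ)^2 + (57)*(n:ℤ)*(j:ℤ)^3*(n.choose (j+1):ℤ)*(n.choose (j+2):ℤ) + (102)*(n:ℤ)*(j:ℤ)^3*(n.choose (j+1):ℤ)^2 + (228)*(n:ℤ)*(j:ℤ)^3*(n.choose j:ℤ)*(n.choose (j+2):ℤ) + (804)*(n:ℤ)*(j:ℤ)^3*(n.choose j:ℤ)*(n.choose (j+1):ℤ) + (228)*(n:ℤ)*(j:ℤ)^3*(n.choose j:ℤ)^2 + (21)*(n:ℤ)*(j:ℤ)^4*(n.choose (j+1):ℤ)*(n.choose (j+2):ℤ) + (30)*(n:ℤ)*(j:ℤ)^4*(n.choose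 (j+1):ℤ)^2 + (84)*(n:ℤ)*(j:ℤ)^4*(n.choose j:ℤ)*(n.choose (j+2):ℤ) + (276)*(n:ℤ)*(j:ℤ)^4*(n.choose j:ℤ)*(n.choose (j+1):ℤ) + (84)*(n:ℤ)*(j:ℤ)^4*(n.choose j:ℤ)^2 + (3)*(n:ℤ)*(j:ℤ)^5*(n.choose (j+1):ℤ)*(n.choose (j+2):ℤ) + (3)*(n:ℤ)*(j:ℤ)^5*(n.choose (j+1):ℤ)^2 + (12)*(n:ℤ)*(j:ℤ)^5*(n.choose j:ℤ)*(n.choose (j+2):ℤ) + (36)*(n:ℤ)*(j:ℤ)^5*(n.choose j:ℤ)*(n.choose (j+1):ℤ) + (12)*(n:ℤ)*(j:ℤ)^5*(n.choose j:ℤ)^2 + (-6)*(n:ℤ)^2*(n.choose (j+1):ℤ)^2 + (12)*(n:ℤ)^2*(n.choose j:ℤ)*(n.choose (j+2):ℤ) + (66)*(n:ℤ)^2*(n.choose j:ℤ)*(n.choose (j+1):ℤ) + (12)*(n:ℤ)^2*(n.choose j:ℤ)^2 + (-27)*(n:ℤ)^2*(j:ℤ)*(n.choose (j+1):ℤ)^2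 + (48)*(n:ℤ)^2*(j:ℤ)*(n.choose j:ℤ)*(n.choose (j+2):ℤ) + (249)*(n:ℤ)^2*(j:ℤ)*(n.choose j:ℤ)*(n.choose (j+1):ℤ) + (48)*(n:ℤ)^2*(j:ℤ)*(n.choose j:ℤ)^2 + (-48)*(n:ℤ)^2*(j:ℤ)^2*(n.choose (j+1):ℤ)^2 + (75)*(n:ℤ)^2*(j:ℤ)^2*(n.choose j:ℤ)*(n.choose (j+2):ℤ) + (360)*(n:ℤ)^2*(j:ℤ)^2*(n.choose j:ℤ)*(n.choose (j+1):ℤ) + (75)*(n:ℤ)^2*(j:ℤ)^2*(n.choose j:ℤ)^2 + (-42)*(n:ℤ)^2*(j:ℤ)^3*(n.choose (j+1):ℤ)^2 + (57)*(n:ℤ)^2*(j:ℤ)^3*(n.choose j:ℤ)*(n.choose (j+2):ℤ) + (246)*(n:ℤ)^2*(j:ℤ)^3*(n.choose j:ℤ)*(n.choose (j+1):ℤ) + (57)*(n:ℤ)^2*(j:ℤ)^3*(n.choose j:ℤ)^2 + (-18)*(n:ℤ)^2*(j:ℤ)^4*(n.choose (j+1):ℤ)^2 + (21)*(n:ℤ)^2*(j:ℤ)^4*(n.choose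 j:ℤ)*(n.choose (j+2):ℤ) + (78)*(n:ℤ)^2*(j:ℤ)^4*(n.choose j:ℤ)*(n.choose (j+1):ℤ) + (21)*(n:ℤ)^2*(j:ℤ)^4*(n.choose j:ℤ)^2 + (-3)*(n:ℤ)^2*(j:ℤ)^5*(n.choose (j+1):ℤ)^2 + (3)*(n:ℤ)^2*(j:ℤ)^5*(n.choose j:ℤ)*(n.choose (j+2):ℤ) + (9)*(n:ℤ)^2*(j:ℤ)^5*(n.choose j:ℤ)*(n.choose (j+1):ℤ) + (3)*(n:ℤ)^2*(j:ℤ)^5*(n.choose j:ℤ)^2 + (6)*(n:ℤ)^3*(n.choose j:ℤ)*(n.choose (j+1):ℤ) + (21)*(n:ℤ)^3*(j:ℤ)*(n.choose j:ℤ)*(n.choose (j+1):ℤ) + (27)*(n:ℤ)^3*(j:ℤ)^2*(n.choose j:ℤ)*(n.choose (j+1):ℤ) + (15)*(n:ℤ)^3*(j:ℤ)^3*(n.choose j:ℤ)*(n.choose (j+1):ℤ) + (3)*(n:ℤ)^3*(j:ℤ)^4*(n.choose j:ℤ)*(n.choose (j+1):ℤ))) * e2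

lemma step (n k : ℕ) : Lterm n k = Gb n (k+1) - Gb n k := by
  match k with
  | 0 =>
    unfold Lterm Gb
    simp only [Nat.choose_zero_right]
    push_cast
    ring
  | 1 =>
    unfold Lterm Gb gcert
    simp only [zero_add, Nat.choose_one_right, Nat.choose_zero_right]
    push_cast
    ring
  | (j+2) =>
    rw [key n j]
    rfl

lemma sum_Lterm (n : ℕ) : ∑ k ∈ Finset.range (n+3), Lterm n k = 0 := by
  have h : ∑ k ∈ Finset.range (n+3), Lterm n k
      = ∑ k ∈ Finset.range (n+3), (Gb n (k+1) - Gb n k) := by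
    exact Finset.sum_congr rfl fun k _ => step n k
  rw [h, Finset.sum_range_sub]
  show gcert n (n+1) - 0 = 0
  have h1 : n.choose (n+1) = 0 := Nat.choose_eq_zero_of_lt (by omega)
  have h2 : n.choose (n+2) = 0 := Nat.choose_eq_zero_of_lt (by omega)
  simp [gcert, h1, h2]

lemma main_rec (n : ℕ) :
    ((n:ℤ)+2)^2 * franel (n+2)
      = (7*(n:ℤ)^2+21*n+16) * franel (n+1) + 8*((n:ℤ)+1)^2 * franel n := by
  have h := sum_Lterm n
  unfold Lterm at h
  rw [Finset.sum_sub_distrib, Finset.sum_sub_distrib, ← Finset.mul_sum,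
    ← Finset.mul_sum, ← Finset.mul_sum] at h
  have hA : ∑ k ∈ Finset.range (n+3), (((n+2).choose k : ℤ))^3 = franel (n+2) := rfl
  have hB : ∑ k ∈ Finset.range (n+3), (((n+1).choose k : ℤ))^3 = franel (n+1) := by
    rw [show n+3 = (n+2)+1 from rfl, Finset.sum_range_succ,
      Nat.choose_eq_zero_of_lt (by omega)]
    simp [franel]
  have hC : ∑ k ∈ Finset.range (n+3), ((n.choose k : ℤ))^3 = franel n := by
    rw [show n+3 = (n+2)+1 from rfl, Finset.sum_range_succ,
      show n+2 = (n+1)+1 from rfl, Finset.sum_range_succ,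
      Nat.choose_eq_zero_of_lt (by omega), Nat.choose_eq_zero_of_lt (by omega)]
    simp [franel]
  rw [hA, hB, hC] at h
  linarith [h]

theorem franel_recurrence :
    franel 0 = 1 ∧ franel 1 = 2 ∧
      ∀ n : ℕ, 1 ≤ n →
        ((n : ℤ) + 1) ^ 2 * franel (n + 1)
          = (7 * (n : ℤ) ^ 2 + 7 * n + 2) * franel n + 8 * (n : ℤ) ^ 2 * franel (n - 1) := by
  refine ⟨by simp [franel], ?_, ?_⟩
  · show ∑ j ∈ Finset.range 2, ((Nat.choose 1 j : ℤ))^3 = 2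
    decide
  · intro n hn
    obtain ⟨m, rfl⟩ : ∃ m, n = m + 1 := ⟨n - 1, by omega⟩
    have h := main_rec m
    have hsub : m + 1 - 1 = m := by omega
    rw [hsub]
    push_cast
    linarith [h]
end
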